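/- Let $k \geq 1$, let $R_1, \dots, R_k$ be rational numbers with $R_j \neq 0$ and $R_j \neq 1$ for all $j$, and let $r_k$ be any rational number. Then $$\frac{r_k}{R_1 \cdots R_k} + \sum_{i=1}^{k-1} \frac{1}{R_1 \cdots R_i (R_i - 1) \cdots (R_{k-1} - 1)} - \sum_{i=1}^{k} \frac{R_k - r_k}{R_1 \cdots R_i (R_i - 1) \cdots (R_k - 1)} = \frac{r_k - 1}{(R_1 - 1) \cdots (R_k - 1)},$$ where in each summand the denominator contains $R_1, \dots, R_i$ together with $R_i - 1, R_{i+1} - 1, \dots$ up to the indicated index. -/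

import Mathlib

/-!
With `Pᵢ = R₁ ⋯ Rᵢ` and `Qᵢ = (Rᵢ - 1) ⋯ (R_k - 1)`, the partial fraction
`1 / (R (R - 1)) = 1 / (R - 1) - 1 / R` makes `∑ᵢ 1 / (Pᵢ Qᵢ)` telescope to
`1 / Q₁ - 1 / P_k`. Both sums of the identity are of this form (for `k - 1` and for `k`),
and what remains is an identity between four fractions.
-/

open Finset

variable {K : Type*} [Field K]

theorem one_div_prod_mul_prod_sub_one_eq_sub {k i : ℕ} (R : ℕ → K) (hi : i ∈ Icc 1 k)
    (h0 : ∀ j ∈ Icc 1 k, R j ≠ 0) (h1 : ∀ j ∈ Icc 1 k, R j ≠ 1) :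
    1 / ((∏ j ∈ Icc 1 i, R j) * ∏ j ∈ Icc i k, (R j - 1))
      = 1 / ((∏ j ∈ Ico 1 i, R j) * ∏ j ∈ Icc i k, (R j - 1))
        - 1 / ((∏ j ∈ Ico 1 (i + 1), R j) * ∏ j ∈ Icc (i + 1) k, (R j - 1)) := by
  obtain ⟨hi1, hik⟩ := mem_Icc.1 hi
  have hP : ∏ j ∈ Ico 1 i, R j ≠ 0 :=
    prod_ne_zero_iff.2 fun j hj => h0 j (Ico_subset_Icc_self.trans (Icc_subset_Icc_right hik) hj)
  have hQ : ∏ j ∈ Icc (i + 1) k, (R j - 1) ≠ 0 :=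
    prod_ne_zero_iff.2 fun j hj =>
      sub_ne_zero.2 (h1 j (Icc_subset_Icc_left (by omega) hj))
  have hR : R i ≠ 0 := h0 i hi
  have hR1 : R i - 1 ≠ 0 := sub_ne_zero.2 (h1 i hi)
  rw [← prod_Ico_mul_eq_prod_Icc hi1, Ico_add_one_right_eq_Icc, ← prod_Ico_mul_eq_prod_Icc hi1,
    ← mul_prod_Ioc_eq_prod_Icc hik, ← Icc_add_one_left_eq_Ioc]
  field_simp
  ring

theorem sum_one_div_prod_mul_prod_sub_one (k : ℕ) (R : ℕ → K)
    (h0 : ∀ j ∈ Icc 1 k, R j ≠ 0) (h1 : ∀ j ∈ Icc 1 k, R j ≠ 1) :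
    ∑ i ∈ Icc 1 k, 1 / ((∏ j ∈ Icc 1 i, R j) * ∏ j ∈ Icc i k, (R j - 1))
      = 1 / ∏ j ∈ Icc 1 k, (R j - 1) - 1 / ∏ j ∈ Icc 1 k, R j := by
  set g : ℕ → K := fun i => 1 / ((∏ j ∈ Ico 1 i, R j) * ∏ j ∈ Icc i k, (R j - 1))
  calc _ = ∑ i ∈ Icc 1 k, -(g (i + 1) - g i) :=
        sum_congr rfl fun i hi => by
          rw [neg_sub]; exact one_div_prod_mul_prod_sub_one_eq_sub R hi h0 h1
    _ = g 1 - g (k + 1) := by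
      rw [sum_neg_distrib, ← Ico_add_one_right_eq_Icc, sum_Ico_sub g (by omega), neg_sub]
    _ = _ := by simp [g, Ico_add_one_right_eq_Icc]

theorem stmt_2 (k : ℕ) (hk : 1 ≤ k) (R : ℕ → ℚ) (r : ℚ)
    (h0 : ∀ j ∈ Icc 1 k, R j ≠ 0) (h1 : ∀ j ∈ Icc 1 k, R j ≠ 1) :
    (r / ∏ j ∈ Icc 1 k, R j)
      + ∑ i ∈ Icc 1 (k - 1),
          1 / ((∏ j ∈ Icc 1 i, R j) * ∏ j ∈ Icc i (k - 1), (R j - 1))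
      - ∑ i ∈ Icc 1 k,
          (R k - r) / ((∏ j ∈ Icc 1 i, R j) * ∏ j ∈ Icc i k, (R j - 1))
      = (r - 1) / ∏ j ∈ Icc 1 k, (R j - 1) := by
  obtain ⟨m, rfl⟩ : ∃ m, k = m + 1 := ⟨k - 1, by omega⟩
  have hm : Icc 1 m ⊆ Icc 1 (m + 1) := Icc_subset_Icc_right m.le_succ
  have hP : ∏ j ∈ Icc 1 m, R j ≠ 0 := prod_ne_zero_iff.2 fun j hj => h0 j (hm hj)
  have hQ : ∏ j ∈ Icc 1 m, (R j - 1) ≠ 0 :=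
    prod_ne_zero_iff.2 fun j hj => sub_ne_zero.2 (h1 j (hm hj))
  have hR : R (m + 1) ≠ 0 := h0 _ (by simp)
  have hR1 : R (m + 1) - 1 ≠ 0 := sub_ne_zero.2 (h1 _ (by simp))
  simp_rw [Nat.add_sub_cancel, div_eq_mul_one_div (R (m + 1) - r), ← mul_sum,
    sum_one_div_prod_mul_prod_sub_one _ R h0 h1,
    sum_one_div_prod_mul_prod_sub_one _ R (fun j hj => h0 j (hm hj)) (fun j hj => h1 j (hm hj)),
    prod_Icc_succ_top (by omega : 1 ≤ m + 1)]
  field_simp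
  ring
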